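/- For every natural number n ≥ 1, if d(n) = 1 then d(n+1) = 2; that is, the value 1 never occurs twice in direct succession in the sequence d. -/
import Mathlib


/-- `d n = ⌊n·log₂ 3⌋ − ⌊(n−1)·log₂ 3⌋`. -/
noncomputable def d (n : ℕ) : ℤ := ⌊(n : ℝ) * Real.logb 2 3⌋ - ⌊((n : ℝ) - 1) * Real.logb 2 3⌋

theorem stmt11 (n : ℕ) (hn : 1 ≤ n) (h : d n = 1) : d (n + 1) = 2 := by
  have hlog2 : (0:ℝ) < Real.log 2 := Real.log_pos (by norm_num)
  have hα2 : Real.logb 2 3 < 2 := by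
    rw [Real.logb, div_lt_iff₀ hlog2]
    have h34 : Real.log 3 < Real.log 4 := Real.log_lt_log (by norm_num) (by norm_num)
    have h4 : Real.log 4 = 2 * Real.log 2 := by
      rw [show (4:ℝ) = 2^2 by norm_num, Real.log_pow]; push_cast; ring
    linarith
  have hα1 : 3/2 < Real.logb 2 3 := by
    rw [Real.logb, lt_div_iff₀ hlog2]
    have h89 : Real.log 8 < Real.log 9 := Real.log_lt_log (by norm_num) (by norm_num)
    have h8 : Real.log 8 = 3 * Real.log 2 := by
      rw [show (8:ℝ) = 2^3 by norm_num, Real.log_pow]; push_cast; ring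
    have h9 : Real.log 9 = 2 * Real.log 3 := by
      rw [show (9:ℝ) = 3^2 by norm_num, Real.log_pow]; push_cast; ring
    nlinarith
  unfold d at h ⊢
  push_cast
  have e1 : ((n:ℝ) + 1 - 1) = (n:ℝ) := by ring
  rw [e1]
  have low : ⌊((n:ℝ) - 1) * Real.logb 2 3⌋ + 3 ≤ ⌊((n:ℝ) + 1) * Real.logb 2 3⌋ := by
    have h1 : ((n:ℝ) - 1) * Real.logb 2 3 + (3:ℤ) ≤ ((n:ℝ) + 1) * Real.logb 2 3 := by push_cast; nlinarith
    have h2 := Int.floor_le_floor h1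
    rwa [Int.floor_add_intCast] at h2
  have high : ⌊((n:ℝ) + 1) * Real.logb 2 3⌋ ≤ ⌊(n:ℝ) * Real.logb 2 3⌋ + 2 := by
    have h1 : ((n:ℝ) + 1) * Real.logb 2 3 ≤ (n:ℝ) * Real.logb 2 3 + (2:ℤ) := by push_cast; nlinarith
    have h2 := Int.floor_le_floor h1
    rwa [Int.floor_add_intCast] at h2
  omega
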